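/- Let ℱ be a family of finite simple graphs and let K(ℱ) be the set of colored regularity graphs K such that no F ∈ ℱ admits a colored homomorphism into K; assume K(ℱ) is nonempty. Then for every p ∈ [0,1], inf{f_K(p) : K ∈ K(ℱ)} = inf{g_K(p) : K ∈ K(ℱ)}. -/

import Mathlib

/-- The three possible colors of an edge of a colored regularity graph. -/
inductive EColor : Type
  | white
  | gray
  | black
deriving DecidableEq

/-- A colored regularity graph (CRG): a finite nonempty vertex set (here `Fin n`),
each vertex colored white (`vcol i = false`) or black (`vcol i = true`), and each
unordered pair of distinct vertices colored white, gray or black. -/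
structure CRG : Type where
  n : ℕ
  npos : 0 < n
  vcol : Fin n → Bool
  ecol : Fin n → Fin n → EColor
  ecol_symm : ∀ i j, ecol i j = ecol j i

namespace CRG

/-- The function `f_K(p) = (1/k²)[p(|VW| + 2|EW|) + (1-p)(|VB| + 2|EB|)]`; the
counts over ordered pairs of distinct vertices give `2|EW|` and `2|EB|`. -/
noncomputable def fK (K : CRG) (p : ℝ) : ℝ :=
  (1 / (K.n : ℝ) ^ 2) *
    (p * (((Finset.univ.filter (fun i : Fin K.n => K.vcol i = false)).card : ℝ)
        + ((Finset.univ.filter (fun ij : Fin K.n × Fin K.n =>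
            ij.1 ≠ ij.2 ∧ K.ecol ij.1 ij.2 = EColor.white)).card : ℝ))
   + (1 - p) * (((Finset.univ.filter (fun i : Fin K.n => K.vcol i = true)).card : ℝ)
        + ((Finset.univ.filter (fun ij : Fin K.n × Fin K.n =>
            ij.1 ≠ ij.2 ∧ K.ecol ij.1 ij.2 = EColor.black)).card : ℝ)))

/-- The matrix `M_K(p)`. -/
noncomputable def M (K : CRG) (p : ℝ) : Matrix (Fin K.n) (Fin K.n) ℝ :=
  Matrix.of fun i j =>
    if i = j then (if K.vcol i then 1 - p else p)
    else
      match K.ecol i j with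
      | EColor.white => p
      | EColor.gray => 0
      | EColor.black => 1 - p

/-- The function `g_K(p)`: the minimum (here: infimum, which is attained) of the
quadratic form `uᵀ M_K(p) u` over the standard simplex. -/
noncomputable def gK (K : CRG) (p : ℝ) : ℝ :=
  sInf { x : ℝ | ∃ u : Fin K.n → ℝ, (∀ i, 0 ≤ u i) ∧ (∑ i, u i) = 1 ∧
    x = ∑ i, ∑ j, u i * K.M p i j * u j }

end CRG

/-- A colored homomorphism from a simple graph `F` to a CRG `K`. -/
def CHom {V : Type} (F : SimpleGraph V) (K : CRG) : Prop :=
  ∃ φ : V → Fin K.n,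
    (∀ u v : V, F.Adj u v →
      (φ u = φ v ∧ K.vcol (φ u) = true) ∨
      (φ u ≠ φ v ∧ K.ecol (φ u) (φ v) ≠ EColor.white)) ∧
    (∀ u v : V, u ≠ v → ¬ F.Adj u v →
      (φ u = φ v ∧ K.vcol (φ u) = false) ∨
      (φ u ≠ φ v ∧ K.ecol (φ u) (φ v) ≠ EColor.black))

/-- A family of finite simple graphs, each presented on a vertex set `Fin n`. -/
abbrev GraphFam : Type := Set ((n : ℕ) × SimpleGraph (Fin n))

/-- The edit distance between two simple graphs on the same finite vertex set. -/
noncomputable def editDist {V : Type} [Fintype V] (G G' : SimpleGraph V) : ℕ :=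
  (symmDiff G.edgeSet G'.edgeSet).ncard

/-- A graph `G` is `ℱ`-free if no member of `ℱ` embeds into `G`. -/
def FamFree (ℱ : GraphFam) {V : Type} (G : SimpleGraph V) : Prop :=
  ∀ F ∈ ℱ, ¬ Nonempty (F.2 ↪g G)

/-- `Dist(G, Forb(ℱ))`: minimum edit distance from `G` to an `ℱ`-free graph on
the same vertex set. -/
noncomputable def distFam (ℱ : GraphFam) {V : Type} [Fintype V] (G : SimpleGraph V) : ℕ :=
  sInf { d | ∃ G' : SimpleGraph V, FamFree ℱ G' ∧ d = editDist G G' }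

/-- `Dist(n, Forb(ℱ))`: maximum of `Dist(G, Forb(ℱ))` over `n`-vertex graphs. -/
noncomputable def distFamN (ℱ : GraphFam) (n : ℕ) : ℕ :=
  sSup { d | ∃ G : SimpleGraph (Fin n), d = distFam ℱ G }

/-- `𝒦(ℱ)`: the set of CRGs into which no member of `ℱ` has a colored homomorphism. -/
def KFam (ℱ : GraphFam) : Set CRG := { K : CRG | ∀ F ∈ ℱ, ¬ CHom F.2 K }

/-!
`f_K(p)` is the quadratic form `uᵀ M_K(p) u` at the uniform weight `u = 1/k`, so `g_K ≤ f_K`.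
Conversely, blowing up vertex `i` of `K` into `m i` copies gives a CRG whose `f`-value is the
quadratic form of `K` at the weight `m / ∑ m`, and which stays in `𝒦(ℱ)` because a colored
homomorphism into the blow-up projects to one into `K`. Rounded weights `⌊N u⌋ / ∑ ⌊N u⌋`
converge to any `u` in the simplex, so by continuity these `f`-values approach `g_K`.
-/

open Filter Topology

theorem sInf_image_eq_of_forall_exists_lt {α : Type*} {S : Set α} {f g : α → ℝ}
    (hg : BddBelow (g '' S)) (hgf : ∀ a ∈ S, g a ≤ f a)
    (hfg : ∀ a ∈ S, ∀ ε > 0, ∃ b ∈ S, f b < g a + ε) :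
    sInf (f '' S) = sInf (g '' S) := by
  rcases S.eq_empty_or_nonempty with rfl | hS
  · simp
  obtain ⟨c, hc⟩ := hg
  have hf : BddBelow (f '' S) := ⟨c, by
    rintro _ ⟨a, ha, rfl⟩
    exact (hc ⟨a, ha, rfl⟩).trans (hgf a ha)⟩
  refine le_antisymm (le_csInf (hS.image g) ?_) (le_csInf (hS.image f) ?_)
  · rintro _ ⟨a, ha, rfl⟩
    refine le_of_forall_pos_lt_add fun ε hε => ?_
    obtain ⟨b, hb, hlt⟩ := hfg a ha ε hε
    exact (csInf_le hf ⟨b, hb, rfl⟩).trans_lt hlt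
  · rintro _ ⟨a, ha, rfl⟩
    exact (csInf_le ⟨c, hc⟩ ⟨a, ha, rfl⟩).trans (hgf a ha)

theorem le_sum_mul_mul_of_forall_le {ι : Type*} [Fintype ι] {A : Matrix ι ι ℝ} {c : ℝ}
    (hA : ∀ i j, c ≤ A i j) {u : ι → ℝ} (hu : u ∈ stdSimplex ℝ ι) :
    c ≤ ∑ i, ∑ j, u i * A i j * u j := by
  have hc : ∑ i, ∑ j, u i * c * u j = c := by
    simp_rw [mul_comm (u _) c, mul_assoc, ← Finset.mul_sum, ← Finset.sum_mul, hu.2]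
    ring
  calc c = ∑ i, ∑ j, u i * c * u j := hc.symm
    _ ≤ ∑ i, ∑ j, u i * A i j * u j := by
      gcongr with i _ j _
      · exact hu.1 j
      · exact hu.1 i
      · exact hA i j

theorem tendsto_floor_mul_div_sum_floor {ι : Type*} [Fintype ι] {u : ι → ℝ}
    (hu : u ∈ stdSimplex ℝ ι) :
    Tendsto (fun N : ℕ => fun i => (⌊u i * N⌋₊ : ℝ) / ∑ j, (⌊u j * N⌋₊ : ℝ)) atTop (𝓝 u) := by
  have hfreq : Tendsto (fun N : ℕ => fun i => (⌊u i * N⌋₊ : ℝ) / N) atTop (𝓝 u) :=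
    tendsto_pi_nhds.2 fun i =>
      (tendsto_nat_floor_mul_div_atTop (hu.1 i)).comp tendsto_natCast_atTop_atTop
  have hsum : Tendsto (fun N : ℕ => ∑ j, (⌊u j * N⌋₊ : ℝ) / N) atTop (𝓝 1) := by
    simpa only [hu.2] using tendsto_finsetSum Finset.univ fun j _ => tendsto_pi_nhds.1 hfreq j
  have hratio : Tendsto (fun N : ℕ => fun i =>
      (⌊u i * N⌋₊ / N : ℝ) / ∑ j, (⌊u j * N⌋₊ : ℝ) / N) atTop (𝓝 u) :=
    tendsto_pi_nhds.2 fun i => by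
      have := (tendsto_pi_nhds.1 hfreq i).div hsum one_ne_zero
      rwa [div_one] at this
  refine hratio.congr' ?_
  filter_upwards [eventually_ne_atTop 0] with N hN
  funext i
  rw [← Finset.sum_div, div_div_div_cancel_right₀ (Nat.cast_ne_zero.2 hN)]

def EColor.weight (p : ℝ) : EColor → ℝ
  | .white => p
  | .gray => 0
  | .black => 1 - p

theorem EColor.min_le_weight (p : ℝ) (c : EColor) : min 0 (min p (1 - p)) ≤ c.weight p := by
  cases c <;> simp [EColor.weight]

theorem const_inv_mem_stdSimplex {n : ℕ} (hn : 0 < n) :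
    (fun _ => (n : ℝ)⁻¹) ∈ stdSimplex ℝ (Fin n) :=
  ⟨fun _ => by positivity, by simp [hn.ne']⟩

def finSigmaFst {n : ℕ} (m : Fin n → ℕ) (a : Fin (∑ i, m i)) : Fin n :=
  (finSigmaFinEquiv.symm a).1

theorem sum_comp_finSigmaFst {M : Type*} [AddCommMonoid M] {n : ℕ} (m : Fin n → ℕ)
    (g : Fin n → M) : ∑ a, g (finSigmaFst m a) = ∑ i, m i • g i := by
  rw [← finSigmaFinEquiv.sum_comp]
  simp [finSigmaFst, Fintype.sum_sigma]

namespace CRG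

variable (K : CRG)

/-- Reading each vertex as a loop of its own color, `M` and colored homomorphisms depend on `K`
only through this coloring of all ordered pairs. -/
def pairCol (i j : Fin K.n) : EColor :=
  if i = j then (if K.vcol i then .black else .white) else K.ecol i j

theorem pairCol_comm (i j : Fin K.n) : K.pairCol i j = K.pairCol j i := by
  by_cases h : i = j
  · rw [h]
  · simp [pairCol, h, Ne.symm h, K.ecol_symm i j]

theorem M_apply (p : ℝ) (i j : Fin K.n) : K.M p i j = (K.pairCol i j).weight p := by
  by_cases h : i = j
  · subst h
    cases hv : K.vcol i <;> simp [M, pairCol, hv, EColor.weight]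
  · cases he : K.ecol i j <;> simp [M, pairCol, h, he, EColor.weight]

theorem fK_eq_sum_M (p : ℝ) : K.fK p = (∑ i, ∑ j, K.M p i j) / K.n ^ 2 := by
  have hM : ∀ i j, K.M p i j =
      p * ((if i = j then (if K.vcol i = false then 1 else 0) else 0)
        + (if i ≠ j ∧ K.ecol i j = .white then 1 else 0))
      + (1 - p) * ((if i = j then (if K.vcol i = true then 1 else 0) else 0)
        + (if i ≠ j ∧ K.ecol i j = .black then 1 else 0)) := by
    intro i j
    by_cases h : i = j
    · subst h
      cases hv : K.vcol i <;> simp [M, hv]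
    · cases he : K.ecol i j <;> simp [M, h, he]
  simp only [fK, hM, Finset.natCast_card_filter, Fintype.sum_prod_type, Finset.sum_add_distrib,
    ← Finset.mul_sum, Finset.sum_ite_eq, Finset.mem_univ, if_true]
  ring

noncomputable def quadForm (p : ℝ) (u : Fin K.n → ℝ) : ℝ := ∑ i, ∑ j, u i * K.M p i j * u j

theorem continuous_quadForm (p : ℝ) : Continuous (K.quadForm p) := by
  unfold quadForm
  fun_prop

theorem quadForm_const_inv (p : ℝ) : K.quadForm p (fun _ => (K.n : ℝ)⁻¹) = K.fK p := by
  simp only [quadForm, fK_eq_sum_M, Finset.sum_div]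
  congr! 2 with i - j -
  ring

theorem gK_eq_sInf_image (p : ℝ) : K.gK p = sInf (K.quadForm p '' stdSimplex ℝ (Fin K.n)) := by
  unfold gK
  congr 1
  ext x
  simp [stdSimplex, quadForm, eq_comm, and_assoc]

theorem min_le_quadForm (p : ℝ) {u : Fin K.n → ℝ} (hu : u ∈ stdSimplex ℝ (Fin K.n)) :
    min 0 (min p (1 - p)) ≤ K.quadForm p u :=
  le_sum_mul_mul_of_forall_le (fun i j => K.M_apply p i j ▸ EColor.min_le_weight p _) hu

theorem bddBelow_quadForm_image (p : ℝ) :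
    BddBelow (K.quadForm p '' stdSimplex ℝ (Fin K.n)) :=
  ⟨_, by
    rintro _ ⟨u, hu, rfl⟩
    exact K.min_le_quadForm p hu⟩

theorem gK_le_quadForm (p : ℝ) {u : Fin K.n → ℝ} (hu : u ∈ stdSimplex ℝ (Fin K.n)) :
    K.gK p ≤ K.quadForm p u :=
  K.gK_eq_sInf_image p ▸ csInf_le (K.bddBelow_quadForm_image p) ⟨u, hu, rfl⟩

theorem gK_le_fK (p : ℝ) : K.gK p ≤ K.fK p :=
  K.quadForm_const_inv p ▸ K.gK_le_quadForm p (const_inv_mem_stdSimplex K.npos)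

theorem min_le_gK (p : ℝ) : min 0 (min p (1 - p)) ≤ K.gK p :=
  K.gK_eq_sInf_image p ▸ le_csInf (Set.Nonempty.image _ ⟨_, const_inv_mem_stdSimplex K.npos⟩)
    (by
      rintro _ ⟨u, hu, rfl⟩
      exact K.min_le_quadForm p hu)

theorem exists_quadForm_lt_gK_add (p : ℝ) {ε : ℝ} (hε : 0 < ε) :
    ∃ u ∈ stdSimplex ℝ (Fin K.n), K.quadForm p u < K.gK p + ε := by
  obtain ⟨_, ⟨u, hu, rfl⟩, hlt⟩ := Real.lt_sInf_add_pos
    (Set.Nonempty.image _ ⟨_, const_inv_mem_stdSimplex K.npos⟩) hε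
  exact ⟨u, hu, K.gK_eq_sInf_image p ▸ hlt⟩

theorem pairCol_ne_white_iff (i j : Fin K.n) :
    K.pairCol i j ≠ .white ↔ (i = j ∧ K.vcol i = true) ∨ (i ≠ j ∧ K.ecol i j ≠ .white) := by
  by_cases h : i = j
  · subst h
    cases hv : K.vcol i <;> simp [pairCol, hv]
  · simp [pairCol, h]

theorem pairCol_ne_black_iff (i j : Fin K.n) :
    K.pairCol i j ≠ .black ↔ (i = j ∧ K.vcol i = false) ∨ (i ≠ j ∧ K.ecol i j ≠ .black) := by
  by_cases h : i = j
  · subst h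
    cases hv : K.vcol i <;> simp [pairCol, hv]
  · simp [pairCol, h]

theorem cHom_iff_pairCol {V : Type} (F : SimpleGraph V) (K : CRG) :
    CHom F K ↔ ∃ φ : V → Fin K.n,
      (∀ u v, F.Adj u v → K.pairCol (φ u) (φ v) ≠ .white) ∧
      (∀ u v, u ≠ v → ¬ F.Adj u v → K.pairCol (φ u) (φ v) ≠ .black) := by
  simp only [CHom, K.pairCol_ne_white_iff, K.pairCol_ne_black_iff]

theorem _root_.CHom.of_pairCol_comp {V : Type} {F : SimpleGraph V} {K' K : CRG}
    (ψ : Fin K'.n → Fin K.n) (hψ : ∀ a b, K.pairCol (ψ a) (ψ b) = K'.pairCol a b)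
    (h : CHom F K') : CHom F K := by
  rw [cHom_iff_pairCol] at h ⊢
  obtain ⟨φ, hadj, hnonadj⟩ := h
  exact ⟨ψ ∘ φ, fun u v huv => hψ _ _ ▸ hadj u v huv,
    fun u v hne huv => hψ _ _ ▸ hnonadj u v hne huv⟩

def blowup (m : Fin K.n → ℕ) (hm : 0 < ∑ i, m i) : CRG where
  n := ∑ i, m i
  npos := hm
  vcol a := K.vcol (finSigmaFst m a)
  ecol a b := K.pairCol (finSigmaFst m a) (finSigmaFst m b)
  ecol_symm _ _ := K.pairCol_comm _ _

variable {m : Fin K.n → ℕ} (hm : 0 < ∑ i, m i)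

theorem pairCol_blowup (a b : Fin (K.blowup m hm).n) :
    (K.blowup m hm).pairCol a b = K.pairCol (finSigmaFst m a) (finSigmaFst m b) := by
  by_cases h : a = b
  · subst h
    rw [pairCol, pairCol, if_pos rfl, if_pos rfl]
    rfl
  · rw [pairCol, if_neg h]
    rfl

theorem blowup_mem_KFam {ℱ : GraphFam} (hK : K ∈ KFam ℱ) : K.blowup m hm ∈ KFam ℱ :=
  fun F hF hF' => hK F hF (hF'.of_pairCol_comp _ fun a b => (K.pairCol_blowup hm a b).symm)

theorem fK_blowup (p : ℝ) :
    (K.blowup m hm).fK p = K.quadForm p (fun i => m i / ∑ j, (m j : ℝ)) := by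
  have hM : ∀ a b : Fin (∑ i, m i),
      (K.blowup m hm).M p a b = K.M p (finSigmaFst m a) (finSigmaFst m b) :=
    fun a b => ((K.blowup m hm).M_apply p a b).trans
      ((congrArg _ (K.pairCol_blowup hm a b)).trans (K.M_apply p _ _).symm)
  rw [fK_eq_sum_M]
  change (∑ a : Fin (∑ i, m i), ∑ b : Fin (∑ i, m i), _) / ((∑ i, m i : ℕ) : ℝ) ^ 2 = _
  simp only [hM, sum_comp_finSigmaFst]
  rw [sum_comp_finSigmaFst m (fun i => ∑ j, m j • K.M p i j)]
  simp only [quadForm, nsmul_eq_mul, Nat.cast_sum, Finset.sum_div, Finset.mul_sum]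
  exact Finset.sum_congr rfl fun i _ => Finset.sum_congr rfl fun j _ => by ring

theorem exists_blowup_fK_lt (p : ℝ) {u : Fin K.n → ℝ} (hu : u ∈ stdSimplex ℝ (Fin K.n))
    {ε : ℝ} (hε : 0 < ε) :
    ∃ (m : Fin K.n → ℕ) (hm : 0 < ∑ i, m i), (K.blowup m hm).fK p < K.quadForm p u + ε := by
  let m : ℕ → Fin K.n → ℕ := fun N i => ⌊u i * N⌋₊
  have hlim : Tendsto (fun N i => (m N i : ℝ) / ∑ j, (m N j : ℝ)) atTop (𝓝 u) :=
    tendsto_floor_mul_div_sum_floor hu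
  have hlt : ∀ᶠ N in atTop,
      K.quadForm p (fun i => m N i / ∑ j, (m N j : ℝ)) < K.quadForm p u + ε :=
    (((K.continuous_quadForm p).tendsto u).comp hlim).eventually
      (gt_mem_nhds (lt_add_of_pos_right _ hε))
  have hpos : ∀ᶠ N in atTop, 0 < ∑ i, m N i := by
    have hsum := ((continuous_finsetSum Finset.univ fun i _ => continuous_apply i).tendsto u).comp
      hlim
    rw [hu.2] at hsum
    filter_upwards [hsum.eventually (lt_mem_nhds one_pos)] with N hN
    refine Nat.pos_of_ne_zero fun h0 => ?_
    have h0' : ∑ j, (m N j : ℝ) = 0 := by exact_mod_cast h0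
    simp [h0'] at hN
  obtain ⟨N, hN, hlt⟩ := (hpos.and hlt).exists
  exact ⟨m N, hN, (K.fK_blowup hN p).trans_lt hlt⟩

end CRG

theorem f_eq_g_general (ℱ : GraphFam)
    (p : ℝ) :
    sInf { x : ℝ | ∃ K ∈ KFam ℱ, x = K.fK p } =
      sInf { x : ℝ | ∃ K ∈ KFam ℱ, x = K.gK p } := by
  have hbdd : BddBelow ((CRG.gK · p) '' KFam ℱ) := ⟨_, by
    rintro _ ⟨K, -, rfl⟩
    exact K.min_le_gK p⟩
  have happrox : ∀ K ∈ KFam ℱ, ∀ ε > 0, ∃ K' ∈ KFam ℱ, K'.fK p < K.gK p + ε := by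
    intro K hK ε hε
    obtain ⟨u, hu, hu_lt⟩ := K.exists_quadForm_lt_gK_add p (half_pos hε)
    obtain ⟨m, hm, hm_lt⟩ := K.exists_blowup_fK_lt p hu (half_pos hε)
    exact ⟨K.blowup m hm, K.blowup_mem_KFam hm hK, by linarith⟩
  convert sInf_image_eq_of_forall_exists_lt hbdd (fun K _ => K.gK_le_fK p) happrox using 2 <;>
    ext <;> simp [eq_comm]

theorem f_eq_g (ℱ : GraphFam) (hne : (KFam ℱ).Nonempty)
    (p : ℝ) (hp : p ∈ Set.Icc (0 : ℝ) 1) :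
    sInf { x : ℝ | ∃ K ∈ KFam ℱ, x = K.fK p } =
      sInf { x : ℝ | ∃ K ∈ KFam ℱ, x = K.gK p } :=
  f_eq_g_general ℱ p
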